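/- arXiv:1404.6781 — 2 statements merged into one kernel-verified Lean document; each statement's English description precedes it below -/
import Mathlib

section
/- A consistent set of literals S is an answer set of a logic program P (i.e., there is a generating set R of P with head(R) = S) if and only if there exists a stable fragment set E of P with head of the union of E equal to S. -/
/-- A literal over atoms `A`: `(true, a)` is the atom `a`, `(false, a)` is `¬ a`. -/
abbrev Lit (A : Type) := Bool × A

/-- A rule with head, positive body and negative body. -/
structure Rule (A : Type) where
  head : Lit A
  pos : Set (Lit A)
  neg : Set (Lit A)

variable {A : Type}

/-- Heads of a set of rules. -/
def headSet (R : Set (Rule A)) : Set (Lit A) := Rule.head '' R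

/-- `R ⊆ P` positively satisfies `P`. -/
def PosSat (P R : Set (Rule A)) : Prop :=
  R ⊆ P ∧ ∀ r ∈ P, r.pos ⊆ headSet R → r ∈ R

/-- The minimal set of rules positively satisfying `P`. -/
def MP (P : Set (Rule A)) : Set (Rule A) := ⋂₀ {R | PosSat P R}

/-- A set of rules defeats a rule. -/
def defeatsRule (R : Set (Rule A)) (r : Rule A) : Prop :=
  (headSet R ∩ r.neg).Nonempty

/-- A set of rules defeats a set of rules. -/
def defeatsSet (R₁ R₂ : Set (Rule A)) : Prop := ∃ r ∈ R₂, defeatsRule R₁ r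

/-- The reduct `P^R` removes each rule defeated by `R`. -/
def reduct (P R : Set (Rule A)) : Set (Rule A) := {r ∈ P | ¬ defeatsRule R r}

/-- `R ⊆ P` is a generating set of `P` iff `R = MP (P^R)`. -/
def GenSet (P R : Set (Rule A)) : Prop := R ⊆ P ∧ R = MP (reduct P R)

/-- A set of literals is consistent iff it contains no complementary pair. -/
def Consistent (S : Set (Lit A)) : Prop :=
  ∀ a : A, ¬ (((true, a) ∈ S) ∧ ((false, a) ∈ S))

/-- Answer sets via generating sets. -/
def AnswerSet (P : Set (Rule A)) (S : Set (Lit A)) : Prop :=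
  Consistent S ∧ ∃ R, GenSet P R ∧ headSet R = S

/-- `Γ_S(P)`: rules whose positive body is in `S` and negative body disjoint from `S`. -/
def Gamma (S : Set (Lit A)) (P : Set (Rule A)) : Set (Rule A) :=
  {r ∈ P | r.pos ⊆ S ∧ r.neg ∩ S = ∅}

/-- Fragments of a program. -/
def Frag (P : Set (Rule A)) : Set (Set (Rule A)) := {R | R ⊆ P ∧ MP R = R}

/-- Fragment reduct: remove fragments defeated by a member of `E`. -/
def fragReduct (P : Set (Rule A)) (E : Set (Set (Rule A))) : Set (Set (Rule A)) :=
  {X ∈ Frag P | ¬ ∃ Y ∈ E, defeatsSet Y X}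

/-- Stable fragment sets. -/
def StableFragSet (P : Set (Rule A)) (E : Set (Set (Rule A))) : Prop :=
  E ⊆ Frag P ∧ fragReduct P E = E

/-- Mutually defeating (conflicting) sets of rules. -/
def Conflicting (X Y : Set (Rule A)) : Prop := defeatsSet X Y ∧ defeatsSet Y X

/-- `X` overrides `Y` w.r.t. the preference relation `lt`. -/
def Overrides (lt : Rule A → Rule A → Prop) (X Y : Set (Rule A)) : Prop :=
  Conflicting X Y ∧
    ∀ r₁ ∈ X, defeatsRule Y r₁ → ∃ r₂ ∈ Y, defeatsRule X r₂ ∧ lt r₂ r₁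

/-- Preferred fragment reduct (semantics G). -/
def prefFragReduct (lt : Rule A → Rule A → Prop) (P : Set (Rule A))
    (E : Set (Set (Rule A))) : Set (Set (Rule A)) :=
  {X ∈ Frag P | ¬ ∃ Y ∈ E, defeatsSet Y X ∧ ¬ Overrides lt X Y}

/-- Preferred stable fragment sets (semantics G). -/
def PrefStableFragSet (lt : Rule A → Rule A → Prop) (P : Set (Rule A))
    (E : Set (Set (Rule A))) : Prop :=
  E ⊆ Frag P ∧ prefFragReduct lt P E = E

/-- Preferred answer sets under the fragment-based semantics G. -/
def GPrefAnswerSet (lt : Rule A → Rule A → Prop) (P : Set (Rule A))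
    (S : Set (Lit A)) : Prop :=
  Consistent S ∧ ∃ E, PrefStableFragSet lt P E ∧ headSet (⋃₀ E) = S

/-- `T(r,R)` for semantics GNO. -/
def Trules (lt : Rule A → Rule A → Prop) (r : Rule A) (R : Set (Rule A)) :
    Set (Rule A) :=
  MP {p ∈ R | ¬ lt p r}

/-- GNO reduct: remove rules `r` with `body⁻(r) ∩ head(T(r,R)) ≠ ∅`. -/
def gnoReduct (lt : Rule A → Rule A → Prop) (P R : Set (Rule A)) : Set (Rule A) :=
  {r ∈ P | ¬ (r.neg ∩ headSet (Trules lt r R)).Nonempty}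

/-- GNO-preferred generating sets. -/
def GNOPrefGen (lt : Rule A → Rule A → Prop) (P R : Set (Rule A)) : Prop :=
  GenSet P R ∧ R = MP (gnoReduct lt P R)

/-- GNO-preferred answer sets. -/
def GNOPrefAnswerSet (lt : Rule A → Rule A → Prop) (P : Set (Rule A))
    (S : Set (Lit A)) : Prop :=
  Consistent S ∧ ∃ R, GNOPrefGen lt P R ∧ headSet R = S

/-- A rule defeats a rule. -/
def defeats (r₁ r₂ : Rule A) : Prop := r₁.head ∈ r₂.neg

/-- `r₁` directly overrides `r₂` w.r.t. `lt`. -/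
def DirOverrides (lt : Rule A → Rule A → Prop) (r₁ r₂ : Rule A) : Prop :=
  (defeats r₁ r₂ ∧ defeats r₂ r₁) ∧ lt r₂ r₁

/-- D-reduct for the direct-conflict semantics. -/
def dReduct (lt : Rule A → Rule A → Prop) (P R : Set (Rule A)) : Set (Rule A) :=
  {r₁ ∈ P | ¬ ∃ r₂ ∈ R, defeats r₂ r₁ ∧ ¬ DirOverrides lt r₁ r₂}

/-- D-preferred generating sets. -/
def DPrefGen (lt : Rule A → Rule A → Prop) (P R : Set (Rule A)) : Prop :=
  R = MP (dReduct lt P R)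

/-- D-preferred answer sets. -/
def DPrefAnswerSet (lt : Rule A → Rule A → Prop) (P : Set (Rule A))
    (S : Set (Lit A)) : Prop :=
  Consistent S ∧ ∃ R, DPrefGen lt P R ∧ headSet R = S

/-- Stratified programs. -/
def Stratified (P : Set (Rule A)) : Prop :=
  ∃ lam : Lit A → ℕ, ∀ r ∈ P,
    (∀ l ∈ r.pos, lam l ≤ lam r.head) ∧ (∀ l ∈ r.neg, lam l < lam r.head)

/-!
The fragment reduct of `E` depends on `E` only through `⋃₀ E`: a fragment survives iff `⋃₀ E`
does not defeat it. For a generating set `R`, the fragments not defeated by `R` are exactly the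
fragments contained in `R`, because a fragment inside the reduct `P^R` lies in `MP (P^R) = R`.
Hence `R ↦ {X ∈ Frag P | X ⊆ R}` and `E ↦ ⋃₀ E` match generating sets with stable fragment sets.
-/

lemma headSet_mono {R R' : Set (Rule A)} (h : R ⊆ R') : headSet R ⊆ headSet R' :=
  Set.image_mono h

lemma defeatsRule_sUnion_iff {E : Set (Set (Rule A))} {r : Rule A} :
    defeatsRule (⋃₀ E) r ↔ ∃ Y ∈ E, defeatsRule Y r := by
  constructor
  · rintro ⟨_, ⟨r', ⟨Y, hY, hr'⟩, rfl⟩, hneg⟩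
    exact ⟨Y, hY, r'.head, ⟨r', hr', rfl⟩, hneg⟩
  · rintro ⟨Y, hY, _, ⟨r', hr', rfl⟩, hneg⟩
    exact ⟨r'.head, ⟨r', ⟨Y, hY, hr'⟩, rfl⟩, hneg⟩

lemma defeatsSet_sUnion_iff {E : Set (Set (Rule A))} {X : Set (Rule A)} :
    defeatsSet (⋃₀ E) X ↔ ∃ Y ∈ E, defeatsSet Y X := by
  simp only [defeatsSet, defeatsRule_sUnion_iff]
  exact ⟨fun ⟨r, hr, Y, hY, h⟩ => ⟨Y, hY, r, hr, h⟩, fun ⟨Y, hY, r, hr, h⟩ => ⟨r, hr, Y, hY, h⟩⟩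

lemma fragReduct_eq (P : Set (Rule A)) (E : Set (Set (Rule A))) :
    fragReduct P E = {X ∈ Frag P | ¬ defeatsSet (⋃₀ E) X} := by
  simp only [fragReduct, defeatsSet_sUnion_iff]

lemma reduct_subset (P R : Set (Rule A)) : reduct P R ⊆ P :=
  Set.sep_subset _ _

lemma subset_reduct_iff {P R X : Set (Rule A)} :
    X ⊆ reduct P R ↔ X ⊆ P ∧ ¬ defeatsSet R X := by
  simp only [defeatsSet, not_exists, not_and]
  exact ⟨fun h => ⟨fun _ hr => (h hr).1, fun _ hr => (h hr).2⟩,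
    fun h _ hr => ⟨h.1 hr, h.2 _ hr⟩⟩

lemma MP_subset (Q : Set (Rule A)) : MP Q ⊆ Q :=
  Set.sInter_subset_of_mem ⟨subset_rfl, fun _ hr _ => hr⟩

lemma posSat_MP (Q : Set (Rule A)) : PosSat Q (MP Q) := by
  refine ⟨MP_subset Q, fun r hr hpos => Set.mem_sInter.2 fun R hR => ?_⟩
  exact hR.2 r hr (hpos.trans (headSet_mono (Set.sInter_subset_of_mem hR)))

lemma subset_MP_of_MP_eq {X Q : Set (Rule A)} (hXQ : X ⊆ Q) (hX : MP X = X) :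
    X ⊆ MP Q := by
  intro r hr
  refine Set.mem_sInter.2 fun R' hR' => ?_
  have hsat : PosSat X (X ∩ R') :=
    ⟨Set.inter_subset_left, fun s hsX hpos =>
      ⟨hsX, hR'.2 s (hXQ hsX) (hpos.trans (headSet_mono Set.inter_subset_right))⟩⟩
  rw [← hX] at hr
  exact (Set.sInter_subset_of_mem hsat hr).2

lemma MP_MP (Q : Set (Rule A)) : MP (MP Q) = MP Q := by
  refine (MP_subset _).antisymm fun r hr => Set.mem_sInter.2 fun R' hR' => ?_
  have hsat : PosSat Q R' :=
    ⟨hR'.1.trans (MP_subset Q), fun s hs hpos =>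
      hR'.2 s ((posSat_MP Q).2 s hs (hpos.trans (headSet_mono hR'.1))) hpos⟩
  exact Set.sInter_subset_of_mem hsat hr

lemma MP_mem_Frag {P Q : Set (Rule A)} (h : Q ⊆ P) : MP Q ∈ Frag P :=
  ⟨(MP_subset Q).trans h, MP_MP Q⟩

lemma sUnion_setOf_frag_subset {P R : Set (Rule A)} (hR : R ∈ Frag P) :
    ⋃₀ {X ∈ Frag P | X ⊆ R} = R :=
  (Set.sUnion_subset fun _ hX => hX.2).antisymm (Set.subset_sUnion_of_mem ⟨hR, subset_rfl⟩)

namespace GenSet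

variable {P R : Set (Rule A)}

lemma subset_reduct (hR : GenSet P R) : R ⊆ reduct P R :=
  hR.2.subset.trans (MP_subset _)

lemma mem_Frag (hR : GenSet P R) : R ∈ Frag P := by
  refine ⟨hR.1, ?_⟩
  nth_rw 1 [hR.2]
  rw [MP_MP]
  exact hR.2.symm

lemma subset_iff_not_defeatsSet (hR : GenSet P R) {X : Set (Rule A)} (hX : X ∈ Frag P) :
    X ⊆ R ↔ ¬ defeatsSet R X := by
  refine ⟨fun h => (subset_reduct_iff.1 (h.trans hR.subset_reduct)).2, fun h => ?_⟩
  rw [hR.2]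
  exact subset_MP_of_MP_eq (subset_reduct_iff.2 ⟨hX.1, h⟩) hX.2

theorem stableFragSet (hR : GenSet P R) : StableFragSet P {X ∈ Frag P | X ⊆ R} := by
  refine ⟨fun _ hX => hX.1, ?_⟩
  rw [fragReduct_eq, sUnion_setOf_frag_subset hR.mem_Frag]
  ext X
  exact and_congr_right fun hX => (hR.subset_iff_not_defeatsSet hX).symm

end GenSet

namespace StableFragSet

variable {P : Set (Rule A)} {E : Set (Set (Rule A))}

lemma mem_iff (hE : StableFragSet P E) {X : Set (Rule A)} :
    X ∈ E ↔ X ∈ Frag P ∧ ¬ defeatsSet (⋃₀ E) X :=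
  Set.ext_iff.1 (hE.2.symm.trans (fragReduct_eq P E)) X

theorem genSet_sUnion (hE : StableFragSet P E) : GenSet P (⋃₀ E) := by
  have hsub : ⋃₀ E ⊆ reduct P (⋃₀ E) := Set.sUnion_subset fun X hX =>
    subset_reduct_iff.2 ((hE.mem_iff.1 hX).imp_left (·.1))
  refine ⟨hsub.trans (reduct_subset _ _), (Set.sUnion_subset fun X hX => ?_).antisymm ?_⟩
  · exact subset_MP_of_MP_eq ((Set.subset_sUnion_of_mem hX).trans hsub) (hE.1 hX).2
  · refine Set.subset_sUnion_of_mem (hE.mem_iff.2 ⟨MP_mem_Frag (reduct_subset _ _), ?_⟩)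
    exact (subset_reduct_iff.1 (MP_subset _)).2

end StableFragSet

theorem answerSet_iff_stableFragSet_general (P : Set (Rule A))
    (S : Set (Lit A)) :
    (∃ R, GenSet P R ∧ headSet R = S) ↔
      (∃ E, StableFragSet P E ∧ headSet (⋃₀ E) = S) := by
  constructor
  · rintro ⟨R, hR, rfl⟩
    exact ⟨_, hR.stableFragSet, by rw [sUnion_setOf_frag_subset hR.mem_Frag]⟩
  · rintro ⟨E, hE, rfl⟩
    exact ⟨_, hE.genSet_sUnion, rfl⟩

/-- a consistent set of literals `S` is an answer set of `P` iff there
is a stable fragment set `E` of `P` with `head(⋃₀ E) = S`. -/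
theorem answerSet_iff_stableFragSet (P : Set (Rule A)) (hP : P.Finite)
    (S : Set (Lit A)) (hS : Consistent S) :
    (∃ R, GenSet P R ∧ headSet R = S) ↔
      (∃ E, StableFragSet P E ∧ headSet (⋃₀ E) = S) :=
  answerSet_iff_stableFragSet_general P S
end

section
/- Every preferred answer set of a logic program with preferences (P,<) under the fragment-based semantics (semantics G) is an answer set of P. -/
variable {A : Type}

/-!
Two fragments cannot override each other: the preference witnesses, taken alternately in
`X` and in `Y`, form an `lt`-descending chain of defeated rules, impossible in a finite program
with a strict preference order. Hence no member of a preferred stable fragment set `E` defeats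
another one (each would have to override the other), so every rule of `⋃₀ E` survives the reduct
`P^(⋃₀ E)` and `⋃₀ E ⊆ MP (P^(⋃₀ E))`. Conversely `MP (P^(⋃₀ E))` is a fragment that no member
of `E` defeats, so it belongs to `E`, giving equality.
-/

section MinimalPositive

variable {P Q : Set (Rule A)}

theorem posSat_self (P : Set (Rule A)) : PosSat P P := ⟨subset_rfl, fun _ hr _ => hr⟩

theorem mp_subset : MP P ⊆ P := Set.sInter_subset_of_mem (posSat_self P)

theorem mp_subset_of_posSat {R : Set (Rule A)} (h : PosSat P R) : MP P ⊆ R :=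
  Set.sInter_subset_of_mem h

theorem posSat_mp (P : Set (Rule A)) : PosSat P (MP P) :=
  ⟨mp_subset, fun r hr hpos => Set.mem_sInter.2 fun _ hR =>
    hR.2 r hr (hpos.trans (Set.image_mono (Set.sInter_subset_of_mem hR)))⟩

theorem mp_mono (hPQ : P ⊆ Q) : MP P ⊆ MP Q := by
  have h : PosSat P (MP Q ∩ P) :=
    ⟨Set.inter_subset_right, fun r hr hpos =>
      ⟨(posSat_mp Q).2 r (hPQ hr) (hpos.trans (Set.image_mono Set.inter_subset_left)), hr⟩⟩
  exact (mp_subset_of_posSat h).trans Set.inter_subset_left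

theorem mp_mp (P : Set (Rule A)) : MP (MP P) = MP P := by
  refine mp_subset.antisymm (mp_subset_of_posSat ⟨mp_subset.trans mp_subset, fun r hr hpos => ?_⟩)
  have hr' : r ∈ MP P := (posSat_mp P).2 r hr (hpos.trans (Set.image_mono mp_subset))
  exact (posSat_mp (MP P)).2 r hr' hpos

theorem mp_mem_frag (hQ : Q ⊆ P) : MP Q ∈ Frag P := ⟨mp_subset.trans hQ, mp_mp Q⟩

end MinimalPositive

section Defeat

variable {X Y : Set (Rule A)} {r : Rule A}

theorem defeatsRule_mono (hXY : X ⊆ Y) (h : defeatsRule X r) : defeatsRule Y r :=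
  h.mono (Set.inter_subset_inter_left _ (Set.image_mono hXY))

theorem defeatsRule_sUnion {E : Set (Set (Rule A))} :
    defeatsRule (⋃₀ E) r ↔ ∃ Y ∈ E, defeatsRule Y r := by
  simp only [defeatsRule, headSet, Set.sUnion_eq_biUnion, Set.image_iUnion₂,
    Set.iUnion₂_inter, Set.nonempty_iUnion, exists_prop]

theorem Overrides.not_overrides {lt : Rule A → Rule A → Prop} [IsStrictOrder (Rule A) lt]
    (hfin : (X ∪ Y).Finite) (hXY : Overrides lt X Y) : ¬ Overrides lt Y X := by
  intro hYX
  set D : Set (Rule A) := {r | (r ∈ X ∧ defeatsRule Y r) ∨ (r ∈ Y ∧ defeatsRule X r)}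
  have hD : D ⊆ X ∪ Y := fun r hr => hr.imp And.left And.left
  have hdesc : ∀ r ∈ D, ∃ r' ∈ D, lt r' r := by
    rintro r (⟨hrX, hd⟩ | ⟨hrY, hd⟩)
    · obtain ⟨r', hr'Y, hd', hlt⟩ := hXY.2 r hrX hd
      exact ⟨r', Or.inr ⟨hr'Y, hd'⟩, hlt⟩
    · obtain ⟨r', hr'X, hd', hlt⟩ := hYX.2 r hrY hd
      exact ⟨r', Or.inl ⟨hr'X, hd'⟩, hlt⟩
  have hDempty : ∀ r ∈ X ∪ Y, r ∉ D := fun r hr =>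
    hfin.wellFoundedOn.induction (P := (· ∉ D)) hr fun r _ ih hrD => by
      obtain ⟨r', hr'D, hlt⟩ := hdesc r hrD
      exact ih r' (hD hr'D) hlt hr'D
  obtain ⟨r₀, hr₀X, hd₀⟩ := hXY.1.2
  exact hDempty r₀ (Or.inl hr₀X) (Or.inl ⟨hr₀X, hd₀⟩)

end Defeat

namespace PrefStableFragSet

variable {lt : Rule A → Rule A → Prop} {P X Y : Set (Rule A)} {E : Set (Set (Rule A))}

theorem sUnion_subset (hE : PrefStableFragSet lt P E) : ⋃₀ E ⊆ P :=
  Set.sUnion_subset fun _ hX => (hE.1 hX).1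

theorem overrides_of_defeatsSet (hE : PrefStableFragSet lt P E) (hX : X ∈ E) (hY : Y ∈ E)
    (h : defeatsSet Y X) : Overrides lt X Y := by
  rw [← hE.2] at hX
  by_contra hno
  exact hX.2 ⟨Y, hY, h, hno⟩

theorem not_defeatsSet [IsStrictOrder (Rule A) lt] (hE : PrefStableFragSet lt P E)
    (hP : P.Finite) (hX : X ∈ E) (hY : Y ∈ E) : ¬ defeatsSet Y X := fun h =>
  have hXY := hE.overrides_of_defeatsSet hX hY h
  hXY.not_overrides (hP.subset (Set.union_subset (hE.1 hX).1 (hE.1 hY).1))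
    (hE.overrides_of_defeatsSet hY hX hXY.1.1)

theorem mp_reduct_sUnion_mem (hE : PrefStableFragSet lt P E) :
    MP (reduct P (⋃₀ E)) ∈ E := by
  have hmem : MP (reduct P (⋃₀ E)) ∈ prefFragReduct lt P E := by
    refine ⟨mp_mem_frag fun _ hr => hr.1, ?_⟩
    rintro ⟨Y, hY, ⟨r, hr, hd⟩, -⟩
    exact (mp_subset hr).2 (defeatsRule_mono (Set.subset_sUnion_of_mem hY) hd)
  rwa [hE.2] at hmem

theorem genSet_sUnion [IsStrictOrder (Rule A) lt] (hE : PrefStableFragSet lt P E)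
    (hP : P.Finite) : GenSet P (⋃₀ E) := by
  refine ⟨hE.sUnion_subset,
    Set.Subset.antisymm ?_ (Set.subset_sUnion_of_mem hE.mp_reduct_sUnion_mem)⟩
  rintro r ⟨X, hX, hrX⟩
  have hXreduct : X ⊆ reduct P (⋃₀ E) := fun r' hr' =>
    ⟨(hE.1 hX).1 hr', fun hd =>
      let ⟨Y, hY, hdY⟩ := defeatsRule_sUnion.1 hd
      hE.not_defeatsSet hP hX hY ⟨r', hr', hdY⟩⟩
  rw [← (hE.1 hX).2] at hrX
  exact mp_mono hXreduct hrX

end PrefStableFragSet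

/-- every G-preferred answer set of `(P,<)` is an answer set of `P`. -/
theorem gPref_is_answerSet (P : Set (Rule A)) (hP : P.Finite)
    (lt : Rule A → Rule A → Prop) (htrans : Transitive lt)
    (hasymm : ∀ r₁ r₂, lt r₁ r₂ → ¬ lt r₂ r₁)
    (S : Set (Lit A)) (h : GPrefAnswerSet lt P S) : AnswerSet P S := by
  obtain ⟨hcons, E, hE, rfl⟩ := h
  have : IsStrictOrder (Rule A) lt :=
    { irrefl := fun r hr => hasymm r r hr hr
      trans := fun _ _ _ h₁ h₂ => htrans h₁ h₂ }
  exact ⟨hcons, ⋃₀ E, hE.genSet_sUnion hP, rfl⟩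
end
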